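/- arXiv:2207.06528 — 2 statements merged into one kernel-verified Lean document; each statement's English description precedes it below -/
import Mathlib

section
/- Let (W,S) be a Coxeter system, let s, t ∈ S, and let w be a word on S such that the words sw and wt are both reduced but the word swt is not reduced. Then sw and wt represent the same element of W, i.e. s·𝐰 = 𝐰·t in W, where 𝐰 is the element represented by w. -/
/-!
Tits' sign representation of `W` on `W × {±1}` shows that the parity of the number of occurrences
of a reflection in the left inversion sequence of a word depends only on the element the word
represents. Comparing a word `ω` with a reduced word `i :: ρ` for the same element gives the
exchange condition: if `s i` is a left descent of `π ω`, then `s i * π ω` is `π ω` with one letter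
deleted. Apply this to the word `w ++ [j]`, of which `s i` is a left descent because `i :: w ++ [j]`
is not reduced. Deleting a letter of `w` would make `s i * π w` shorter than `i :: w`, so the
deleted letter is the final `j`, i.e. `s i * π w * s j = π w`.
-/

namespace CoxeterSystem

open List

variable {B W : Type*} [Group W] {M : CoxeterMatrix B} (cs : CoxeterSystem M W)

theorem prod_map_alternatingWord_two_mul {G : Type*} [Monoid G] (f : B → G) (i j : B) (m : ℕ) :
    ((alternatingWord i j (2 * m)).map f).prod = (f i * f j) ^ m := by
  induction m with
  | zero => simp [alternatingWord]
  | succ m ih =>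
    rw [show 2 * (m + 1) = 2 * m + 1 + 1 by ring, alternatingWord_succ', alternatingWord_succ',
      if_neg (by simp [parity_simps]), if_pos (by simp [parity_simps])]
    simp [ih, pow_succ', mul_assoc]

theorem leftInvSeq_alternatingWord_two_mul (i j : B) (m : ℕ) :
    cs.leftInvSeq (alternatingWord i j (2 * m))
      = (range (2 * m)).map fun k ↦ cs.simple i * (cs.simple j * cs.simple i) ^ k := by
  refine ext_getElem (by simp) fun k hk _ ↦ ?_
  have hk' : k < 2 * m := by simpa using hk
  rw [getElem_leftInvSeq_alternatingWord cs i j m k hk', getElem_map, getElem_range,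
    prod_alternatingWord_eq_mul_pow, if_neg (by simp [parity_simps]),
    show (2 * k + 1) / 2 = k by omega]

section SignAction

variable [DecidableEq W]

/-- `signAction ω` is the action of `(π ω)⁻¹` in the sign representation; that it depends only on
`π ω` is `coe_signRep_wordProd_inv`. -/
def signAction (ω : List B) (p : W × ℤˣ) : W × ℤˣ :=
  ((cs.wordProd ω)⁻¹ * p.1 * cs.wordProd ω, (-1) ^ (cs.leftInvSeq ω).count p.1 * p.2)

@[simp]
theorem signAction_nil : cs.signAction [] = id := by
  ext p <;> simp [signAction]

theorem count_map_conj_simple (i : B) (L : List W) (t : W) :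
    (L.map (MulAut.conj (cs.simple i))).count t = L.count (cs.simple i * t * cs.simple i) := by
  conv_lhs => rw [show t = MulAut.conj (cs.simple i) (cs.simple i * t * cs.simple i) by
    simp [mul_assoc]]
  exact count_map_of_injective _ _ (MulAut.conj _).injective _

theorem signAction_cons (i : B) (ω : List B) :
    cs.signAction (i :: ω) = cs.signAction ω ∘ cs.signAction [i] := by
  funext ⟨t, ε⟩
  ext
  · simp [signAction, wordProd_cons, mul_assoc]
  · simp only [signAction, leftInvSeq, count_cons, count_nil, count_map_conj_simple, beq_iff_eq,
      wordProd_singleton, inv_simple, pow_add, Function.comp_apply, map_nil]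
    split_ifs <;> simp [mul_comm]

theorem signAction_singleton_involutive (i : B) :
    Function.Involutive (cs.signAction [i]) := by
  intro p
  rw [← Function.comp_apply (f := cs.signAction [i]), ← signAction_cons]
  ext
  · simp [signAction, wordProd_cons]
  · by_cases h : p.1 = cs.simple i <;> simp [signAction, leftInvSeq, h, count_cons]

def simpleSignPerm (i : B) : Equiv.Perm (W × ℤˣ) :=
  (cs.signAction_singleton_involutive i).toPerm

theorem coe_inv_prod_map_simpleSignPerm (ω : List B) :
    ⇑(ω.map cs.simpleSignPerm).prod⁻¹ = cs.signAction ω := by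
  induction ω with
  | nil => simp
  | cons i ω ih =>
    rw [map_cons, prod_cons, mul_inv_rev, Equiv.Perm.coe_mul, ih, signAction_cons]
    rfl

theorem even_count_leftInvSeq_alternatingWord (i j : B) (t : W) :
    Even ((cs.leftInvSeq (alternatingWord i j (2 * M i j))).count t) := by
  have hperiod : ∀ k, cs.simple i * (cs.simple j * cs.simple i) ^ (M i j + k)
      = cs.simple i * (cs.simple j * cs.simple i) ^ k := fun k ↦ by
    rw [pow_add, simple_mul_simple_pow', one_mul]
  rw [leftInvSeq_alternatingWord_two_mul, two_mul, range_add, map_append, map_map,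
    count_append]
  simp only [Function.comp_def, hperiod]
  exact ⟨_, rfl⟩

theorem signAction_alternatingWord (i j : B) :
    cs.signAction (alternatingWord i j (2 * M i j)) = id := by
  have hprod : cs.wordProd (alternatingWord i j (2 * M i j)) = 1 := by
    simp [prod_alternatingWord_eq_mul_pow, simple_mul_simple_pow]
  funext ⟨t, ε⟩
  obtain ⟨c, hc⟩ := cs.even_count_leftInvSeq_alternatingWord i j t
  simp [signAction, hprod, hc, ← two_mul, pow_mul]

theorem isLiftable_simpleSignPerm : M.IsLiftable cs.simpleSignPerm := by
  intro i j
  rw [← prod_map_alternatingWord_two_mul, ← inv_eq_one]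
  refine DFunLike.coe_injective ?_
  rw [coe_inv_prod_map_simpleSignPerm, signAction_alternatingWord, Equiv.Perm.coe_one]

def signRep : W →* Equiv.Perm (W × ℤˣ) :=
  cs.lift ⟨cs.simpleSignPerm, cs.isLiftable_simpleSignPerm⟩

theorem coe_signRep_wordProd_inv (ω : List B) :
    ⇑(cs.signRep (cs.wordProd ω))⁻¹ = cs.signAction ω := by
  rw [← coe_inv_prod_map_simpleSignPerm, wordProd, signRep, map_list_prod, map_map]
  congr 4
  funext i
  exact cs.lift_apply_simple cs.isLiftable_simpleSignPerm i

theorem neg_one_pow_count_leftInvSeq_eq {ω ω' : List B} (h : cs.wordProd ω = cs.wordProd ω')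
    (t : W) : (-1 : ℤˣ) ^ (cs.leftInvSeq ω).count t = (-1) ^ (cs.leftInvSeq ω').count t := by
  have h' : cs.signAction ω = cs.signAction ω' := by
    rw [← coe_signRep_wordProd_inv, ← coe_signRep_wordProd_inv, h]
  simpa [signAction] using congrArg Prod.snd (congrFun h' (t, 1))

end SignAction

theorem simple_mem_leftInvSeq_of_length_simple_mul_lt {ω : List B} {i : B}
    (h : cs.length (cs.simple i * cs.wordProd ω) < cs.length (cs.wordProd ω)) :
    cs.simple i ∈ cs.leftInvSeq ω := by
  classical
  obtain ⟨ρ, hρ, hρω⟩ := cs.exists_isReduced (cs.simple i * cs.wordProd ω)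
  have hprod : cs.wordProd (i :: ρ) = cs.wordProd ω := by
    rw [wordProd_cons, ← hρω, simple_mul_simple_cancel_left]
  have hred : cs.IsReduced (i :: ρ) := by
    have := cs.length_simple_mul (cs.wordProd ω) i
    rw [IsReduced, hprod, length_cons, ← hρ.eq, ← hρω]
    omega
  have hcount : (cs.leftInvSeq (i :: ρ)).count (cs.simple i) = 1 :=
    count_eq_one_of_mem hred.nodup_leftInvSeq (by simp [leftInvSeq])
  have hparity := cs.neg_one_pow_count_leftInvSeq_eq hprod (cs.simple i)
  rw [hcount, pow_one] at hparity
  by_contra hmem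
  rw [count_eq_zero_of_not_mem hmem, pow_zero] at hparity
  exact absurd hparity (by decide)

theorem exists_wordProd_eraseIdx_of_length_simple_mul_lt {ω : List B} {i : B}
    (h : cs.length (cs.simple i * cs.wordProd ω) < cs.length (cs.wordProd ω)) :
    ∃ k < ω.length, cs.simple i * cs.wordProd ω = cs.wordProd (ω.eraseIdx k) := by
  obtain ⟨k, hk, hks⟩ := mem_iff_getElem.mp (cs.simple_mem_leftInvSeq_of_length_simple_mul_lt h)
  refine ⟨k, by simpa using hk, ?_⟩
  rw [← getD_leftInvSeq_mul_wordProd, getD_eq_getElem _ 1 hk, hks]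

end CoxeterSystem

open CoxeterSystem List in
/-- If `s·w` and `w·t` are reduced words but `s·w·t` is not, then `sw` and `wt` represent the
same element of `W`, i.e. `s·𝐰 = 𝐰·t`. -/
theorem simple_mul_eq_mul_simple_of_not_reduced {B W : Type*} [Group W] {M : CoxeterMatrix B}
    (cs : CoxeterSystem M W) (i j : B) (w : List B)
    (h1 : cs.IsReduced (i :: w)) (h2 : cs.IsReduced (w ++ [j]))
    (h3 : ¬ cs.IsReduced (i :: (w ++ [j]))) :
    cs.simple i * cs.wordProd w = cs.wordProd w * cs.simple j := by
  have hsu : cs.length (cs.simple i * cs.wordProd w) = w.length + 1 := by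
    simpa [wordProd_cons] using h1.eq
  have hdescent : cs.length (cs.simple i * cs.wordProd (w ++ [j]))
      < cs.length (cs.wordProd (w ++ [j])) := by
    have hne : cs.length (cs.simple i * cs.wordProd (w ++ [j]))
        ≠ cs.length (cs.wordProd (w ++ [j])) + 1 := fun h ↦
      h3 (by rw [CoxeterSystem.IsReduced, wordProd_cons, h, h2.eq, length_cons])
    have := cs.length_simple_mul (cs.wordProd (w ++ [j])) i
    omega
  obtain ⟨k, hk, hexch⟩ := cs.exists_wordProd_eraseIdx_of_length_simple_mul_lt hdescent
  rw [wordProd_append, wordProd_singleton] at hexch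
  obtain hkw | rfl := Nat.lt_succ_iff_lt_or_eq.mp (by simpa using hk : k < w.length + 1)
  · rw [eraseIdx_append_of_lt_length hkw, wordProd_append, wordProd_singleton, ← mul_assoc,
      mul_left_inj] at hexch
    have := cs.length_wordProd_le (w.eraseIdx k)
    rw [length_eraseIdx_of_lt hkw, ← hexch] at this
    omega
  · rw [eraseIdx_append_of_length_le le_rfl] at hexch
    simpa [← mul_assoc] using congrArg (· * cs.simple j) hexch
end

section
/- Let (W,S) be a Coxeter system, X ⊆ S, and let w = s_{i_1}⋯s_{i_k} be a word on S. For 0 ≤ j ≤ k write the element represented by the prefix s_{i_1}⋯s_{i_j} as v_j·w_j with v_j ∈ W_X and w_j of minimal length in W_X·w_j. Let j₁ < ⋯ < j_p be exactly those indices j for which the reflection r_j(w) = s_{i_1}⋯s_{i_{j-1}}s_{i_j}s_{i_{j-1}}⋯s_{i_1} lies in W_X, and set t_n = w_{j_n−1}·s_{i_{j_n}}·w_{j_n−1}⁻¹ for 1 ≤ n ≤ p. Then each t_n lies in the generating set of W_X (i.e. t_n ∈ X as a subset of W), and v_j = t_1⋯t_{n−1} whenever j_{n−1} ≤ j < j_n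 (with j₀ = 0, j_{p+1} = k+1). -/
/-- The standard parabolic subgroup of a Coxeter system generated by the simple reflections
indexed by `X`. -/
def CoxeterSystem.standardParabolic {B W : Type*} [Group W] {M : CoxeterMatrix B}
    (cs : CoxeterSystem M W) (X : Set B) : Subgroup W :=
  Subgroup.closure (cs.simple '' X)

/-!
Tits' permutation representation of `W` on `W × ZMod 2` yields the reflection cocycle
`inversionParity`, which detects right inversions. It gives the strong exchange and deletion
properties, hence reduced words over `X` for the elements of `W_X`.

Write the prefix as `p_j = v_j w_j`, let `s` be the next letter and `t_j = w_j s w_j⁻¹`; the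
reflection of `w` at that position is `v_j t_j v_j⁻¹`, which lies in `W_X` iff `t_j` does. If
`t_j ∈ W_X`, then `p_{j+1} = (v_j t_j) w_j`, so `v_{j+1} = v_j t_j` by uniqueness of the
factorisation, and additivity of length forces `ℓ(t_j) = 1`, i.e. `t_j ∈ X`. Otherwise a left
descent `s_x` (`x ∈ X`) of `v_j⁻¹ v_{j+1}` would be a left inversion of `w_j s` but not of
`w_j`, which forces `s_x = t_j ∉ W_X`; hence `v_{j+1} = v_j`.
-/

open List in
theorem List.filter_lt_filter_range (p : ℕ → Bool) {j k : ℕ} (h : j ≤ k) :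
    ((range k).filter p).filter (fun m => decide (m < j)) = (range j).filter p := by
  obtain ⟨d, rfl⟩ := Nat.exists_eq_add_of_le h
  rw [filter_filter, range_add, filter_append, filter_map]
  simp +contextual [filter_congr, mem_range]

theorem List.eq_prod_map_filter_range {M : Type*} [Monoid M] (p : ℕ → Bool) (f g : ℕ → M)
    {n : ℕ} (h0 : g 0 = 1) (hsucc : ∀ j < n, g (j + 1) = if p j then g j * f j else g j) :
    ∀ j ≤ n, g j = (((List.range j).filter p).map f).prod := by
  intro j hj
  induction j with
  | zero => simpa using h0
  | succ j ih =>
    rw [hsucc j hj, ih (by omega), List.range_succ, List.filter_append]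
    cases hp : p j <;> simp [hp]

namespace CoxeterSystem

variable {B W : Type*} [Group W] {M : CoxeterMatrix B} (cs : CoxeterSystem M W)

section InversionParity

open scoped Classical

noncomputable def reflectionPerm {a : W} (ha : a * a = 1) : Equiv.Perm (W × ZMod 2) :=
  Function.Involutive.toPerm (fun p => (a * p.1 * a, p.2 + if p.1 = a then 1 else 0)) <| by
    rintro ⟨t, c⟩
    have hconj : a * (a * t * a) * a = t := by
      rw [show a * (a * t * a) * a = (a * a) * t * (a * a) by group, ha, one_mul, mul_one]
    have hfix : a * t * a = a ↔ t = a := by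
      constructor
      · intro h; rw [← hconj, h, ha, one_mul]
      · rintro rfl; rw [ha, one_mul]
    simp only [hconj, hfix, add_assoc, CharTwo.add_self_eq_zero, add_zero]

theorem reflectionPerm_apply {a : W} (ha : a * a = 1) (t : W) (c : ZMod 2) :
    reflectionPerm ha (t, c) = (a * t * a, c + if t = a then 1 else 0) := rfl

theorem reflectionPerm_mul_pow_apply {a b : W} (ha : a * a = 1) (hb : b * b = 1) (n : ℕ)
    (t : W) (c : ZMod 2) :
    ((reflectionPerm ha * reflectionPerm hb) ^ n) (t, c) =
      ((a * b) ^ n * t * ((a * b) ^ n)⁻¹,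
        c + ∑ j ∈ Finset.range (2 * n), if t = b * (a * b) ^ j then 1 else 0) := by
  have ha' : a⁻¹ = a := inv_eq_of_mul_eq_one_right ha
  have hb' : b⁻¹ = b := inv_eq_of_mul_eq_one_right hb
  have conj_eq_iff (g x y : W) : g * x * g⁻¹ = y ↔ x = g⁻¹ * y * g := by
    constructor <;> rintro rfl <;> group
  have hstep (x : W) (c : ZMod 2) : (reflectionPerm ha * reflectionPerm hb) (x, c) =
      (a * b * x * (a * b)⁻¹, c + (if x = b * (a * b) ^ 0 then 1 else 0)
        + if x = b * (a * b) ^ 1 then 1 else 0) := by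
    have hfix : b * x * b⁻¹ = a ↔ x = b * (a * b) := by rw [conj_eq_iff, hb', mul_assoc]
    rw [hb'] at hfix
    simp only [Equiv.Perm.mul_apply, reflectionPerm_apply, hfix, pow_zero, pow_one, mul_one,
      add_assoc, mul_inv_rev, ha', hb', Prod.mk.injEq, and_true]
    group
  have hshift (x : W) (j : ℕ) :
      a * b * x * (a * b)⁻¹ = b * (a * b) ^ j ↔ x = b * (a * b) ^ (j + 2) := by
    rw [conj_eq_iff, mul_inv_rev, ha', hb', pow_succ, pow_succ']
    simp only [mul_assoc]
  induction n generalizing t c with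
  | zero => simp
  | succ n ih =>
    rw [pow_succ, Equiv.Perm.mul_apply, hstep, ih, Nat.mul_succ, Finset.sum_range_succ',
      Finset.sum_range_succ']
    simp only [hshift, Prod.mk.injEq]
    constructor
    · simp only [pow_succ, mul_inv_rev, mul_assoc]
    · abel

-- `(s i * s i') ^ M i i' = 1` makes the summands `M i i'`-periodic, so each is counted twice.
theorem isLiftable_reflectionPerm :
    M.IsLiftable fun i => reflectionPerm (cs.simple_mul_simple_self i) := by
  intro i i'
  ext ⟨t, c⟩ : 1
  rw [reflectionPerm_mul_pow_apply, cs.simple_mul_simple_pow, two_mul, Finset.sum_range_add]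
  simp [pow_add, cs.simple_mul_simple_pow, CharTwo.add_self_eq_zero]

noncomputable def reflectionRep : W →* Equiv.Perm (W × ZMod 2) :=
  cs.lift ⟨_, cs.isLiftable_reflectionPerm⟩

/-- The parity of the number of occurrences of `t` in the right inversion sequence of any word
for `w`. -/
noncomputable def inversionParity (w t : W) : ZMod 2 := (cs.reflectionRep w (t, 0)).2

theorem reflectionRep_simple (i : B) :
    cs.reflectionRep (cs.simple i) = reflectionPerm (cs.simple_mul_simple_self i) :=
  cs.lift_apply_simple _ i

theorem reflectionRep_apply (w t : W) (c : ZMod 2) :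
    cs.reflectionRep w (t, c) = (w * t * w⁻¹, c + cs.inversionParity w t) := by
  induction w using cs.simple_induction_left generalizing t c with
  | one => simp [inversionParity]
  | mul_simple_left w i ih =>
    rw [inversionParity, map_mul, Equiv.Perm.mul_apply, Equiv.Perm.mul_apply, ih, ih,
      reflectionRep_simple, reflectionPerm_apply, reflectionPerm_apply, zero_add, add_assoc,
      mul_inv_rev, inv_simple]
    simp only [mul_assoc]

theorem inversionParity_mul (u v t : W) :
    cs.inversionParity (u * v) t =
      cs.inversionParity v t + cs.inversionParity u (v * t * v⁻¹) := by
  conv_lhs => rw [inversionParity, map_mul, Equiv.Perm.mul_apply, reflectionRep_apply,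
    reflectionRep_apply, zero_add]

theorem inversionParity_one (t : W) : cs.inversionParity 1 t = 0 := by
  simp [inversionParity]

theorem inversionParity_simple (i : B) (t : W) :
    cs.inversionParity (cs.simple i) t = if t = cs.simple i then 1 else 0 := by
  rw [inversionParity, reflectionRep_simple, reflectionPerm_apply, zero_add]

theorem IsReflection.inversionParity_self {t : W} (ht : cs.IsReflection t) :
    cs.inversionParity t t = 1 := by
  obtain ⟨u, i, rfl⟩ := ht
  have e1 := cs.inversionParity_mul (u * cs.simple i) u⁻¹ (u * cs.simple i * u⁻¹)
  have e2 := cs.inversionParity_mul u (cs.simple i) (cs.simple i)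
  have e3 := cs.inversionParity_mul u u⁻¹ (u * cs.simple i * u⁻¹)
  have hu : u⁻¹ * (u * cs.simple i * u⁻¹) * u⁻¹⁻¹ = cs.simple i := by group
  have hs : cs.simple i * cs.simple i * (cs.simple i)⁻¹ = cs.simple i := by group
  rw [hu] at e1 e3
  rw [hs, inversionParity_simple, if_pos rfl] at e2
  rw [mul_inv_cancel, inversionParity_one] at e3
  linear_combination e1 + e2 - e3

theorem mem_rightInvSeq_of_inversionParity_ne_zero {ω : List B} {t : W}
    (h : cs.inversionParity (cs.wordProd ω) t ≠ 0) : t ∈ cs.rightInvSeq ω := by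
  induction ω with
  | nil => simp [inversionParity_one] at h
  | cons i ω ih =>
    rw [wordProd_cons, inversionParity_mul, inversionParity_simple] at h
    rw [rightInvSeq, List.mem_cons]
    by_cases hi : cs.wordProd ω * t * (cs.wordProd ω)⁻¹ = cs.simple i
    · left
      rw [← hi]
      group
    · right
      rw [if_neg hi, add_zero] at h
      exact ih h

theorem isRightInversion_iff_inversionParity_ne_zero {w t : W} (ht : cs.IsReflection t) :
    cs.IsRightInversion w t ↔ cs.inversionParity w t ≠ 0 := by
  have of_ne_zero {w : W} (h : cs.inversionParity w t ≠ 0) : cs.IsRightInversion w t := by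
    obtain ⟨ω, hω, rfl⟩ := cs.exists_isReduced w
    exact cs.isRightInversion_of_mem_rightInvSeq hω
      (cs.mem_rightInvSeq_of_inversionParity_ne_zero h)
  refine ⟨fun hw h0 => ?_, of_ne_zero⟩
  refine ht.not_isRightInversion_mul_left_iff.mpr hw (of_ne_zero ?_)
  rw [inversionParity_mul, ht.inversionParity_self, ht.mul_self, one_mul, ht.inv, h0,
    add_zero]
  exact one_ne_zero

theorem exists_eraseIdx_of_isRightInversion {ω : List B} {t : W}
    (h : cs.IsRightInversion (cs.wordProd ω) t) :
    ∃ j < ω.length, cs.wordProd ω * t = cs.wordProd (ω.eraseIdx j) := by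
  have hmem := cs.mem_rightInvSeq_of_inversionParity_ne_zero
    ((cs.isRightInversion_iff_inversionParity_ne_zero h.1).mp h)
  obtain ⟨j, hj, rfl⟩ := List.mem_iff_getElem.mp hmem
  refine ⟨j, by simpa using hj, ?_⟩
  rw [← List.getD_eq_getElem _ 1 hj, wordProd_mul_getD_rightInvSeq]

theorem eq_conj_of_isLeftInversion_mul_simple {w t : W} {i : B}
    (hw : ¬cs.IsLeftInversion w t) (hwi : cs.IsLeftInversion (w * cs.simple i) t) :
    t = w * cs.simple i * w⁻¹ := by
  rw [← isRightInversion_inv_iff, isRightInversion_iff_inversionParity_ne_zero _ hwi.1] at hw hwi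
  rw [mul_inv_rev, inv_simple, inversionParity_mul, not_not.mp hw, zero_add,
    inversionParity_simple, ne_eq, ite_eq_right_iff, not_forall] at hwi
  obtain ⟨h, -⟩ := hwi
  rw [← h]
  group

theorem exists_isReduced_sublist (ω : List B) :
    ∃ σ : List B, σ.Sublist ω ∧ cs.IsReduced σ ∧ cs.wordProd σ = cs.wordProd ω := by
  induction ω using List.reverseRecOn with
  | nil => exact ⟨[], List.Sublist.refl _, by simp [IsReduced], rfl⟩
  | append_singleton ω i ih =>
    obtain ⟨σ, hσω, hσ, hπ⟩ := ih
    rcases cs.length_mul_simple (cs.wordProd σ) i with hup | hdown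
    · refine ⟨σ ++ [i], hσω.append (List.Sublist.refl _), ?_, by simp [wordProd_append, hπ]⟩
      simp [IsReduced, wordProd_append, hup, hσ.eq]
    · obtain ⟨j, hj, he⟩ := cs.exists_eraseIdx_of_isRightInversion (ω := σ)
        ⟨cs.isReflection_simple i, by omega⟩
      refine ⟨σ.eraseIdx j,
        (σ.eraseIdx_sublist j).trans (hσω.trans (List.sublist_append_left _ _)), ?_, ?_⟩
      · have hlen := List.length_eraseIdx_add_one hj
        have hσlen := hσ.eq
        rw [IsReduced, ← he]
        omega
      · rw [← he, hπ, wordProd_append, wordProd_singleton]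

end InversionParity

section Parabolic

variable {cs} {X : Set B}

theorem simple_mem_standardParabolic {i : B} (hi : i ∈ X) :
    cs.simple i ∈ cs.standardParabolic X :=
  Subgroup.subset_closure ⟨i, hi, rfl⟩

theorem exists_wordProd_of_mem_standardParabolic {u : W} (hu : u ∈ cs.standardParabolic X) :
    ∃ ω : List B, (∀ i ∈ ω, i ∈ X) ∧ cs.wordProd ω = u := by
  induction hu using Subgroup.closure_induction with
  | mem x hx =>
    obtain ⟨i, hi, rfl⟩ := hx
    exact ⟨[i], by simpa using hi, cs.wordProd_singleton i⟩
  | one => exact ⟨[], by simp, cs.wordProd_nil⟩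
  | mul x y _ _ ihx ihy =>
    obtain ⟨ω₁, h₁, rfl⟩ := ihx
    obtain ⟨ω₂, h₂, rfl⟩ := ihy
    exact ⟨ω₁ ++ ω₂, by simpa [or_imp, forall_and] using ⟨h₁, h₂⟩, cs.wordProd_append _ _⟩
  | inv x _ ihx =>
    obtain ⟨ω, h, rfl⟩ := ihx
    exact ⟨ω.reverse, by simpa using h, cs.wordProd_reverse ω⟩

theorem exists_isReduced_of_mem_standardParabolic {u : W} (hu : u ∈ cs.standardParabolic X) :
    ∃ ω : List B, (∀ i ∈ ω, i ∈ X) ∧ cs.IsReduced ω ∧ cs.wordProd ω = u := by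
  obtain ⟨ω, hX, rfl⟩ := exists_wordProd_of_mem_standardParabolic hu
  obtain ⟨σ, hσω, hσ, hπ⟩ := cs.exists_isReduced_sublist ω
  exact ⟨σ, fun i hi => hX i (hσω.subset hi), hσ, hπ⟩

theorem exists_isLeftDescent_of_mem_standardParabolic {u : W}
    (hu : u ∈ cs.standardParabolic X) (hne : u ≠ 1) : ∃ i ∈ X, cs.IsLeftDescent u i := by
  obtain ⟨_ | ⟨i, ω⟩, hX, hred, rfl⟩ := exists_isReduced_of_mem_standardParabolic hu
  · exact absurd cs.wordProd_nil hne
  · refine ⟨i, hX i List.mem_cons_self, ?_⟩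
    rw [IsLeftDescent, hred.eq, wordProd_cons, simple_mul_simple_cancel_left]
    exact (cs.length_wordProd_le ω).trans_lt (by simp)

theorem mem_simple_image_of_length_eq_one {u : W} (hu : u ∈ cs.standardParabolic X)
    (h : cs.length u = 1) : u ∈ cs.simple '' X := by
  obtain ⟨ω, hX, hred, rfl⟩ := exists_isReduced_of_mem_standardParabolic hu
  obtain ⟨i, rfl⟩ := List.length_eq_one_iff.mp (hred.eq ▸ h)
  exact ⟨i, hX i (List.mem_singleton_self i), (cs.wordProd_singleton i).symm⟩

variable (cs X) in
/-- `d` is `(X, ∅)`-reduced (of minimal length in `W_X d`), stated as additivity of length. -/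
def IsParabolicReduced (d : W) : Prop :=
  ∀ x ∈ cs.standardParabolic X, cs.length (x * d) = cs.length x + cs.length d

namespace IsParabolicReduced

variable {d d' v v' : W}

theorem one : cs.IsParabolicReduced X 1 := fun x _ => by simp

theorem eq_of_mul_eq_mul (hd : cs.IsParabolicReduced X d) (hd' : cs.IsParabolicReduced X d')
    (hv : v ∈ cs.standardParabolic X) (hv' : v' ∈ cs.standardParabolic X)
    (h : v * d = v' * d') : v = v' := by
  set c := v'⁻¹ * v
  have hc : c ∈ cs.standardParabolic X := mul_mem (inv_mem hv') hv
  have hcd : c * d = d' := by rw [mul_assoc, h, inv_mul_cancel_left]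
  have h₁ := hd c hc
  have h₂ := hd' c⁻¹ (inv_mem hc)
  rw [← hcd, inv_mul_cancel_left, length_inv] at h₂
  have hc1 : c = 1 := cs.length_eq_zero_iff.mp (by omega)
  exact (inv_mul_eq_one.mp hc1).symm

theorem conj_simple_mem_image (hd : cs.IsParabolicReduced X d) {i : B}
    (ht : d * cs.simple i * d⁻¹ ∈ cs.standardParabolic X) :
    d * cs.simple i * d⁻¹ ∈ cs.simple '' X := by
  refine mem_simple_image_of_length_eq_one ht ?_
  have h := hd _ ht
  rw [inv_mul_cancel_right] at h
  rcases cs.length_mul_simple d i with h' | h' <;> omega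

theorem not_isLeftInversion_simple (hd : cs.IsParabolicReduced X d) {i : B} (hi : i ∈ X) :
    ¬cs.IsLeftInversion d (cs.simple i) := by
  rw [isLeftInversion_simple_iff_isLeftDescent, IsLeftDescent,
    hd _ (simple_mem_standardParabolic hi), length_simple]
  omega

theorem eq_one_of_mul_eq_mul_simple (hd : cs.IsParabolicReduced X d)
    (hd' : cs.IsParabolicReduced X d') {u : W} (hu : u ∈ cs.standardParabolic X) {i : B}
    (h : u * d' = d * cs.simple i) (ht : d * cs.simple i * d⁻¹ ∉ cs.standardParabolic X) :
    u = 1 := by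
  by_contra hne
  obtain ⟨x, hx, hdesc⟩ := exists_isLeftDescent_of_mem_standardParabolic hu hne
  have hinv : cs.IsLeftInversion (d * cs.simple i) (cs.simple x) := by
    rw [isLeftInversion_simple_iff_isLeftDescent, IsLeftDescent, ← h, ← mul_assoc,
      hd' _ (mul_mem (simple_mem_standardParabolic hx) hu), hd' _ hu]
    exact Nat.add_lt_add_right hdesc _
  have hx_eq := cs.eq_conj_of_isLeftInversion_mul_simple (hd.not_isLeftInversion_simple hx) hinv
  exact ht (hx_eq ▸ simple_mem_standardParabolic hx)

theorem eq_ite_of_mul_eq_mul_simple (hd : cs.IsParabolicReduced X d)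
    (hd' : cs.IsParabolicReduced X d') (hv : v ∈ cs.standardParabolic X)
    (hv' : v' ∈ cs.standardParabolic X) {i : B} (h : v' * d' = v * d * cs.simple i)
    [Decidable (d * cs.simple i * d⁻¹ ∈ cs.standardParabolic X)] :
    v' = if d * cs.simple i * d⁻¹ ∈ cs.standardParabolic X then v * (d * cs.simple i * d⁻¹)
      else v := by
  split_ifs with ht
  · exact hd'.eq_of_mul_eq_mul hd hv' (mul_mem hv ht) (by rw [h]; group)
  · have hu := hd.eq_one_of_mul_eq_mul_simple hd' (mul_mem (inv_mem hv) hv')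
      (by rw [mul_assoc, h]; group) ht
    exact (inv_mul_eq_one.mp hu).symm

end IsParabolicReduced

end Parabolic

end CoxeterSystem

/-- Positions are `0`-based: the reflection at position `m` uses the prefix of length `m`. -/
theorem parabolic_part_of_prefixes {B W : Type*} [Inhabited B] [Group W] {M : CoxeterMatrix B}
    (cs : CoxeterSystem M W) (X : Set B)
    [∀ a : W, Decidable (a ∈ cs.standardParabolic X)]
    (w : List B) (v wr : ℕ → W)
    (hdecomp : ∀ j ≤ w.length, cs.wordProd (w.take j) = v j * wr j)
    (hv : ∀ j ≤ w.length, v j ∈ cs.standardParabolic X)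
    (hwr : ∀ j ≤ w.length, ∀ x ∈ cs.standardParabolic X,
      cs.length (x * wr j) = cs.length x + cs.length (wr j)) :
    (∀ m ∈ (List.range w.length).filter
        (fun m => decide ((cs.leftInvSeq w).getD m 1 ∈ cs.standardParabolic X)),
      wr m * cs.simple (w.getD m default) * (wr m)⁻¹ ∈ cs.simple '' X) ∧
    (∀ j ≤ w.length, v j =
      ((((List.range w.length).filter
          (fun m => decide ((cs.leftInvSeq w).getD m 1 ∈ cs.standardParabolic X))).filter
            (fun m => decide (m < j))).map
        (fun m => wr m * cs.simple (w.getD m default) * (wr m)⁻¹)).prod) := by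
  have hred : ∀ j ≤ w.length, cs.IsParabolicReduced X (wr j) := hwr
  have hprefix (j : ℕ) (hj : j < w.length) :
      v (j + 1) * wr (j + 1) = v j * wr j * cs.simple (w.getD j default) := by
    rw [← hdecomp _ hj, ← hdecomp _ hj.le, List.getD_eq_getElem _ _ hj, List.take_add_one,
      List.getElem?_eq_getElem hj, Option.toList_some, cs.wordProd_append, cs.wordProd_singleton]
  have hreflection (j : ℕ) (hj : j < w.length) :
      (cs.leftInvSeq w).getD j 1 ∈ cs.standardParabolic X ↔
        wr j * cs.simple (w.getD j default) * (wr j)⁻¹ ∈ cs.standardParabolic X := by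
    have hvj := hv j hj.le
    rw [List.getD_eq_getElem _ _ (by simpa using hj), cs.getElem_leftInvSeq _ _ hj,
      hdecomp _ hj.le, List.getD_eq_getElem _ _ hj,
      show v j * wr j * cs.simple w[j] * (v j * wr j)⁻¹ =
        v j * (wr j * cs.simple w[j] * (wr j)⁻¹) * (v j)⁻¹ by group,
      Subgroup.mul_mem_cancel_right _ (inv_mem hvj), Subgroup.mul_mem_cancel_left _ hvj]
  refine ⟨fun m hm => ?_, fun j hj => ?_⟩
  · simp only [List.mem_filter, List.mem_range, decide_eq_true_eq] at hm
    exact (hred m hm.1.le).conj_simple_mem_image ((hreflection m hm.1).mp hm.2)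
  · rw [List.filter_lt_filter_range _ hj]
    refine List.eq_prod_map_filter_range _ _ v ?_ (fun j hj => ?_) j hj
    · exact (hred 0 (Nat.zero_le _)).eq_of_mul_eq_mul .one (hv 0 (Nat.zero_le _)) (one_mem _)
        (by simp [← hdecomp 0 (Nat.zero_le _)])
    · rw [(hred j hj.le).eq_ite_of_mul_eq_mul_simple (hred (j + 1) hj) (hv j hj.le)
        (hv (j + 1) hj) (hprefix j hj)]
      simp only [decide_eq_true_eq, hreflection j hj]
end
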